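/- Let μ₂ > μ₃ ≥ 0 be real numbers and let (t_s)_{s∈ℕ} be a sequence of reals with 0 ≤ t_s ≤ 1 for all s. Define T(μ) = ∑_{s=0}^∞ e^{−μ} (μ^s/s!) t_s (the series converges absolutely). Then t₁ ≤ (e^{μ₂} T(μ₂) − e^{μ₃} T(μ₃)) / (μ₂ − μ₃). -/

import Mathlib

/-- The observable quantity at laser intensity `μ`:
`T(μ) = ∑_{s=0}^∞ e^{−μ} (μ^s/s!) t_s` (Poisson average of `(t_s)`). -/
noncomputable def decoyT (μ : ℝ) (t : ℕ → ℝ) : ℝ :=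
  ∑' s : ℕ, Real.exp (-μ) * μ ^ s / (Nat.factorial s : ℝ) * t s

/-!
Multiplying by `e^μ` turns `T(μ)` into the power series `∑ μ^s/s! t_s`, whose coefficients are
nonnegative. Hence every term is monotone in `μ ≥ 0`, so the difference of the series at `μ₂`
and `μ₃` dominates its `s = 1` term, which is `(μ₂ - μ₃) t₁`.
-/

open Nat

lemma summable_pow_div_factorial_mul_of_abs_le {t : ℕ → ℝ} {C : ℝ} (ht : ∀ s, |t s| ≤ C)
    (μ : ℝ) : Summable fun s : ℕ => μ ^ s / (s ! : ℝ) * t s := by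
  refine Summable.of_norm_bounded ((Real.summable_pow_div_factorial |μ|).mul_right C) fun s => ?_
  rw [Real.norm_eq_abs, abs_mul, abs_div, abs_pow, Nat.abs_cast]
  gcongr
  exact ht s

lemma exp_mul_decoyT (μ : ℝ) (t : ℕ → ℝ) :
    Real.exp μ * decoyT μ t = ∑' s : ℕ, μ ^ s / (s ! : ℝ) * t s := by
  simp only [decoyT, mul_assoc, mul_div_assoc, tsum_mul_left]
  rw [← mul_assoc, ← Real.exp_add, add_neg_cancel, Real.exp_zero, one_mul]

lemma mul_sub_le_tsum_pow_div_factorial_mul_sub {t : ℕ → ℝ} (ht : ∀ s, 0 ≤ t s) {μ₂ μ₃ : ℝ}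
    (h3 : 0 ≤ μ₃) (h32 : μ₃ ≤ μ₂) (hs₂ : Summable fun s : ℕ => μ₂ ^ s / (s ! : ℝ) * t s)
    (hs₃ : Summable fun s : ℕ => μ₃ ^ s / (s ! : ℝ) * t s) :
    t 1 * (μ₂ - μ₃) ≤ ∑' s : ℕ, μ₂ ^ s / (s ! : ℝ) * t s - ∑' s : ℕ, μ₃ ^ s / (s ! : ℝ) * t s := by
  have term_mono (s : ℕ) : 0 ≤ μ₂ ^ s / (s ! : ℝ) * t s - μ₃ ^ s / (s ! : ℝ) * t s := by
    rw [sub_nonneg]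
    gcongr
    exact ht s
  calc t 1 * (μ₂ - μ₃)
      _ = μ₂ ^ 1 / (1 ! : ℝ) * t 1 - μ₃ ^ 1 / (1 ! : ℝ) * t 1 := by
        simp only [pow_one, factorial_one, cast_one, div_one]; ring
      _ ≤ ∑' s : ℕ, (μ₂ ^ s / (s ! : ℝ) * t s - μ₃ ^ s / (s ! : ℝ) * t s) :=
        (hs₂.sub hs₃).le_tsum 1 fun s _ => term_mono s
      _ = _ := hs₂.tsum_sub hs₃

/-- **Decoy-state upper bound on the single-photon term `t₁`.**
For intensities `μ₂ > μ₃ ≥ 0` and per-photon-number probabilities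
`0 ≤ t_s ≤ 1`, one has
`t₁ ≤ (e^{μ₂} T(μ₂) − e^{μ₃} T(μ₃)) / (μ₂ − μ₃)`. -/
theorem decoy_t1_upper_bound (μ₂ μ₃ : ℝ) (h32 : μ₃ < μ₂) (h3 : 0 ≤ μ₃)
    (t : ℕ → ℝ) (ht0 : ∀ s, 0 ≤ t s) (ht1 : ∀ s, t s ≤ 1) :
    t 1 ≤ (Real.exp μ₂ * decoyT μ₂ t - Real.exp μ₃ * decoyT μ₃ t) / (μ₂ - μ₃) := by
  have ht_abs (s : ℕ) : |t s| ≤ 1 := abs_le.mpr ⟨by linarith [ht0 s], ht1 s⟩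
  rw [le_div_iff₀ (sub_pos.mpr h32), exp_mul_decoyT, exp_mul_decoyT]
  exact mul_sub_le_tsum_pow_div_factorial_mul_sub ht0 h3 h32.le
    (summable_pow_div_factorial_mul_of_abs_le ht_abs μ₂)
    (summable_pow_div_factorial_mul_of_abs_le ht_abs μ₃)
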